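/- Let D₁, D₂ be two disjoint closed discs in ℂ and let L be the straight line segment joining a boundary point of D₁ to a boundary point of D₂ that realizes the minimal distance between the discs. Then the set N = D₁ ∪ L ∪ D₂ is compact, connected, and its complement ℂ \ N is connected. -/

import Mathlib

/-!
Let `u` be the unit vector from `c₁` to `c₂` and `w = i u`. Both centres and the whole segment
`L` lie on the line `{z | ⟪z - c₁, w⟫ = 0}`, and moving a point of `ℂ \ N` in direction `±w` away
from that line keeps it outside `N` (distances to the centres only grow). Hence each closed
half-plane minus `N` is path connected: every point can be pushed out along `±w` into a smaller,
convex half-plane that misses `N`. The two pieces share a point of the line far from the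
bounded set `N`.
-/

open Set Metric Bornology RealInnerProductSpace

section

variable {E : Type*} [NormedAddCommGroup E] [InnerProductSpace ℝ E]

theorem inner_add_smul_sub (z c w : E) (t : ℝ) :
    ⟪z + t • w - c, w⟫ = ⟪z - c, w⟫ + t * ‖w‖ ^ 2 := by
  rw [add_sub_right_comm, inner_add_left, real_inner_smul_left, real_inner_self_eq_norm_sq]

theorem Convex.inner_sub_preimage {s : Set ℝ} (hs : Convex ℝ s) (c w : E) :
    Convex ℝ {z | ⟪z - c, w⟫ ∈ s} := by
  intro x hx y hy a b ha hb hab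
  have hcombo : a • x + b • y - c = a • (x - c) + b • (y - c) := by
    linear_combination (norm := module) hab • c
  simpa only [mem_ofPred_eq, hcombo, inner_add_left, real_inner_smul_left, ← smul_eq_mul]
    using hs hx hy ha hb hab

theorem isCompact_segment (x y : E) : IsCompact (segment ℝ x y) := by
  simpa only [convexHull_pair] using (toFinite {x, y}).isCompact_convexHull (𝕜 := ℝ)

theorem exists_add_smul_notMem_of_isBounded {K : Set E} (hb : IsBounded K) (c : E) {v : E}
    (hv : v ≠ 0) : ∃ s : ℝ, c + s • v ∉ K := by
  obtain ⟨R, hR⟩ := hb.subset_closedBall c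
  refine ⟨(|R| + 1) / ‖v‖, fun h => ?_⟩
  have hRv := mem_closedBall_iff_norm.1 (hR h)
  rw [add_sub_cancel_left, norm_smul, Real.norm_eq_abs, abs_of_nonneg (by positivity),
    div_mul_cancel₀ _ (norm_ne_zero_iff.2 hv)] at hRv
  linarith [le_abs_self R]

/-- Moving a point of `Kᶜ` in direction `±w` away from the hyperplane `{z | ⟪z - c, w⟫ = 0}`
keeps it in `Kᶜ`; equivalently, `K` contains the segment parallel to `w` from each of its points
to the hyperplane. -/
def IsStarShapedToHyperplane (K : Set E) (c w : E) : Prop :=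
  ∀ z (t : ℝ), 0 ≤ ⟪z - c, w⟫ * t → z + t • w ∈ K → z ∈ K

namespace IsStarShapedToHyperplane

variable {K K' : Set E} {c w : E}

theorem union (hK : IsStarShapedToHyperplane K c w) (hK' : IsStarShapedToHyperplane K' c w) :
    IsStarShapedToHyperplane (K ∪ K') c w := fun z t ht hz =>
  hz.imp (hK z t ht) (hK' z t ht)

theorem neg (hK : IsStarShapedToHyperplane K c w) : IsStarShapedToHyperplane K c (-w) := by
  intro z t ht hz
  refine hK z (-t) ?_ ?_
  · simpa only [inner_neg_right, neg_mul, mul_neg] using ht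
  · rwa [neg_smul, ← smul_neg]

theorem of_subset_hyperplane (hK : K ⊆ {z | ⟪z - c, w⟫ = 0}) : IsStarShapedToHyperplane K c w := by
  intro z t ht hz
  have hzt : ⟪z - c, w⟫ = -(t * ‖w‖ ^ 2) := by
    rw [eq_neg_iff_add_eq_zero, ← inner_add_smul_sub]; exact hK hz
  rw [hzt] at ht
  have htw : t * ‖w‖ = 0 := pow_eq_zero_iff two_ne_zero |>.1 (by nlinarith [sq_nonneg (t * ‖w‖)])
  have : t • w = 0 := by
    rw [← norm_eq_zero, norm_smul, Real.norm_eq_abs, ← abs_norm, ← abs_mul, htw, abs_zero]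
  rwa [this, add_zero] at hz

theorem closedBall {a : E} (ha : ⟪a - c, w⟫ = 0) (r : ℝ) :
    IsStarShapedToHyperplane (closedBall a r) c w := by
  intro z t ht hz
  have hza : ⟪z - a, w⟫ = ⟪z - c, w⟫ := by
    rw [← sub_sub_sub_cancel_right z a c, inner_sub_left, ha, sub_zero]
  have hsq : ‖z - a‖ ^ 2 ≤ ‖z + t • w - a‖ ^ 2 := by
    rw [add_sub_right_comm, norm_add_sq_real, real_inner_smul_right, hza]
    nlinarith [sq_nonneg ‖t • w‖]
  rw [mem_closedBall, dist_eq_norm] at hz ⊢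
  exact ((pow_le_pow_iff_left₀ (norm_nonneg _) (norm_nonneg _) two_ne_zero).1 hsq).trans hz

theorem isPathConnected_halfSpace_diff
    (hK : IsStarShapedToHyperplane K c w) (hb : IsBounded K) (hw : w ≠ 0) :
    IsPathConnected ({z | 0 ≤ ⟪z - c, w⟫} \ K) := by
  set U := {z | 0 ≤ ⟪z - c, w⟫} \ K
  obtain ⟨R, hR⟩ := hb.subset_closedBall c
  have hKle : ∀ k ∈ K, ⟪k - c, w⟫ ≤ R * ‖w‖ := fun k hk =>
    (real_inner_le_norm _ _).trans <|
      mul_le_mul_of_nonneg_right (mem_closedBall_iff_norm.1 (hR hk)) (norm_nonneg w)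
  set m := max (R * ‖w‖) 0
  set S := {z | m < ⟪z - c, w⟫}
  have hSU : S ⊆ U := fun z (hz : m < _) =>
    ⟨show 0 ≤ ⟪z - c, w⟫ from (le_max_right _ _).trans hz.le,
      fun hzK => (hKle z hzK).not_gt ((le_max_left _ _).trans_lt hz)⟩
  obtain ⟨T, hT0, hT⟩ : ∃ T : ℝ, 0 ≤ T ∧ m < T * ‖w‖ ^ 2 :=
    ⟨(m + 1) / ‖w‖ ^ 2, by positivity, by rw [div_mul_cancel₀ _ (by positivity)]; linarith⟩
  have hlift : ∀ z ∈ U, z + T • w ∈ S := fun z ⟨(hz : 0 ≤ ⟪z - c, w⟫), _⟩ => by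
    simp only [S, mem_ofPred_eq, inner_add_smul_sub]; linarith
  have hjoin : ∀ z ∈ U, JoinedIn U z (z + T • w) := by
    rintro z ⟨hz : 0 ≤ ⟪z - c, w⟫, hzK⟩
    refine .of_segment_subset ?_
    rw [segment_eq_image', add_sub_cancel_left]
    rintro _ ⟨θ, hθ, rfl⟩
    dsimp only
    rw [smul_smul]
    have hθT : 0 ≤ θ * T := mul_nonneg hθ.1 hT0
    refine ⟨?_, fun hK' => hzK (hK z _ (mul_nonneg hz hθT) hK')⟩
    simp only [mem_ofPred_eq, inner_add_smul_sub]
    positivity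
  have hc : c + T • w ∈ S := by
    simpa only [S, mem_ofPred_eq, inner_add_smul_sub, sub_self, inner_zero_left, zero_add]
  have hS : IsPathConnected S := ((convex_Ioi m).inner_sub_preimage c w).isPathConnected ⟨_, hc⟩
  exact ⟨_, hSU hc, fun z hz =>
    ((hS.joinedIn _ hc _ (hlift z hz)).mono hSU).trans (hjoin z hz).symm⟩

theorem isConnected_compl {v : E}
    (hK : IsStarShapedToHyperplane K c w) (hb : IsBounded K) (hw : w ≠ 0) (hv : v ≠ 0)
    (hvw : ⟪v, w⟫ = 0) : IsConnected Kᶜ := by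
  obtain ⟨s, hs⟩ := exists_add_smul_notMem_of_isBounded hb c hv
  have hsplit : Kᶜ = ({z | 0 ≤ ⟪z - c, w⟫} \ K) ∪ ({z | 0 ≤ ⟪z - c, -w⟫} \ K) := by
    ext z
    simp only [mem_compl_iff, mem_union, mem_sdiff, mem_ofPred_eq, inner_neg_right, neg_nonneg]
    constructor
    · exact fun hz => (le_total 0 ⟪z - c, w⟫).imp (⟨·, hz⟩) (⟨·, hz⟩)
    · rintro (⟨-, hz⟩ | ⟨-, hz⟩) <;> exact hz
  have hline : ⟪c + s • v - c, w⟫ = 0 := by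
    rw [add_sub_cancel_left, real_inner_smul_left, hvw, mul_zero]
  rw [hsplit]
  refine IsConnected.union ⟨c + s • v, ⟨hline.ge, hs⟩, ⟨?_, hs⟩⟩
    (hK.isPathConnected_halfSpace_diff hb hw).isConnected
    (hK.neg.isPathConnected_halfSpace_diff hb (neg_ne_zero.2 hw)).isConnected
  simp only [mem_ofPred_eq, inner_neg_right, hline, neg_zero, le_refl]

end IsStarShapedToHyperplane

end

theorem Complex.real_inner_self_I_mul (z : ℂ) : ⟪z, Complex.I * z⟫ = 0 := by
  simp [Complex.inner, mul_assoc, Complex.mul_conj]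

theorem stmt_13 (c₁ c₂ : ℂ) (r₁ r₂ : ℝ) (hr₁ : 0 < r₁) (hr₂ : 0 < r₂)
    (hsep : r₁ + r₂ < dist c₁ c₂) :
    let u : ℂ := ‖c₂ - c₁‖⁻¹ • (c₂ - c₁)
    let L : Set ℂ := segment ℝ (c₁ + r₁ • u) (c₂ - r₂ • u)
    let N : Set ℂ := Metric.closedBall c₁ r₁ ∪ L ∪ Metric.closedBall c₂ r₂
    IsCompact N ∧ IsConnected N ∧ IsConnected Nᶜ := by
  intro u L N
  have hc : c₂ - c₁ ≠ 0 := sub_ne_zero.2 (dist_pos.1 (by linarith)).symm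
  have hu : ‖u‖ = 1 := norm_smul_inv_norm hc
  have hu0 : u ≠ 0 := norm_ne_zero_iff.1 (by rw [hu]; exact one_ne_zero)
  have hc₂ : c₂ = c₁ + ‖c₂ - c₁‖ • u := by
    rw [smul_inv_smul₀ (norm_ne_zero_iff.2 hc), add_sub_cancel]
  have hline : ∀ s : ℝ, ⟪c₁ + s • u - c₁, Complex.I * u⟫ = 0 := fun s => by
    rw [add_sub_cancel_left, real_inner_smul_left, Complex.real_inner_self_I_mul, mul_zero]
  have hD₁ : c₁ + r₁ • u ∈ closedBall c₁ r₁ := by simp [hu, abs_of_pos hr₁]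
  have hD₂ : c₂ - r₂ • u ∈ closedBall c₂ r₂ := by simp [hu, abs_of_pos hr₂]
  have hcompact : IsCompact N :=
    ((isCompact_closedBall _ _).union (isCompact_segment _ _)).union (isCompact_closedBall _ _)
  refine ⟨hcompact, ?_, ?_⟩
  · have hD₁L : IsConnected (closedBall c₁ r₁ ∪ L) :=
      ((convex_closedBall c₁ r₁).isConnected ⟨_, hD₁⟩).union ⟨_, hD₁, left_mem_segment ℝ _ _⟩
        ((convex_segment _ _).isConnected ⟨_, left_mem_segment ℝ _ _⟩)
    exact hD₁L.union ⟨_, .inr (right_mem_segment ℝ _ _), hD₂⟩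
      ((convex_closedBall c₂ r₂).isConnected ⟨_, hD₂⟩)
  · have hL : L ⊆ {z | ⟪z - c₁, Complex.I * u⟫ = 0} :=
      ((convex_singleton 0).inner_sub_preimage _ _).segment_subset (hline r₁) <| by
        rw [hc₂, add_sub_assoc, ← sub_smul]; exact hline _
    have hstar : IsStarShapedToHyperplane N c₁ (Complex.I * u) :=
      ((IsStarShapedToHyperplane.closedBall (by simp) r₁).union
        (.of_subset_hyperplane hL)).union (.closedBall (hc₂ ▸ hline _) r₂)
    exact hstar.isConnected_compl hcompact.isBounded (mul_ne_zero Complex.I_ne_zero hu0) hu0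
      (Complex.real_inner_self_I_mul u)
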